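/- Suppose R is a Kähler curvature-type tensor on C^n that is Einstein with R_{iī} := ∑_j R(e_i,ē_i,e_j,ē_j) = λ for every unit vector e_i completed to a unitary frame, i.e., the Ricci curvature equals λ. Then for any unitary frame {e_a} = {∑_i T_{ai} E_i} (T ∈ U(n)) with reference unitary frame {E_i}, and any reals x_1,...,x_n, one has (1/2)∑_{a,b} R(e_a,ē_a,e_b,ē_b)(x_a - x_b)² = λ ∑_a x_a² - ∑_{i,j,k,l} R(E_i,Ē_j,E_k,Ē_l) P_{ij̄} P_{kl̄}, where P = ᵗT Λ_x T̄ and Λ_x = diag(x_1,...,x_n); moreover P is Hermitian with |P|² = ∑_a x_a². -/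

import Mathlib

/-!
Put `A_{ab} = R(e_a, ē_a, e_b, ē_b)`. The Kähler symmetries give `R_{ij̄kl̄} = R_{kl̄ij̄}`, so `A` is
symmetric, and the Einstein condition says that every row sum of `A` is `λ`; hence
`(1/2) ∑ A_{ab} (x_a - x_b)² = λ ∑ x_a² - ∑ A_{ab} x_a x_b`. Reading `R` as a bilinear form on
matrices, `A_{ab} = R(e_a ⊗ ē_a, e_b ⊗ ē_b)`, so the last sum is `R(P, P)` for
`P = ∑_a x_a e_a ⊗ ē_a = V Λ_x Vᴴ` with `V = ᵗT` unitary. This form of `P` shows that it is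
Hermitian, and unitary invariance of the Frobenius norm gives `|P|² = |Λ_x|² = ∑ x_a²`.
-/

open Matrix

/-- Evaluation of a curvature-type tensor given by components `R i j k l` in the
reference unitary frame `{E_i}` (identified with the standard basis of `ℂ^n`):
`R(X, Ȳ, Z, W̄)`, `ℂ`-linear in `X, Z` and conjugate-linear in `Y, W`. -/
noncomputable def curvEval {n : ℕ} (R : Fin n → Fin n → Fin n → Fin n → ℂ)
    (X Y Z W : Fin n → ℂ) : ℂ :=
  ∑ i, ∑ j, ∑ k, ∑ l,
    R i j k l * X i * (starRingEnd ℂ) (Y j) * Z k * (starRingEnd ℂ) (W l)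

section CurvForm

variable {ι K : Type*} [Fintype ι] [CommSemiring K]

/-- Summing over index pairs makes `curvForm_comm` a single exchange of two sums. -/
def curvForm (R : ι → ι → ι → ι → K) : Matrix ι ι K →ₗ[K] Matrix ι ι K →ₗ[K] K :=
  LinearMap.mk₂ K
    (fun (M N : Matrix ι ι K) =>
      ∑ p : ι × ι, ∑ q : ι × ι, R p.1 p.2 q.1 q.2 * M p.1 p.2 * N q.1 q.2)
    (fun M₁ M₂ N => by simp only [Matrix.add_apply, mul_add, add_mul, Finset.sum_add_distrib])
    (fun c M N => by
      simp only [Matrix.smul_apply, smul_eq_mul, Finset.mul_sum, mul_assoc, mul_left_comm c])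
    (fun M N₁ N₂ => by simp only [Matrix.add_apply, mul_add, Finset.sum_add_distrib])
    (fun c M N => by
      simp only [Matrix.smul_apply, smul_eq_mul, Finset.mul_sum, mul_assoc, mul_left_comm c])

variable (R : ι → ι → ι → ι → K)

lemma curvForm_apply (M N : Matrix ι ι K) :
    curvForm R M N = ∑ i, ∑ j, ∑ k, ∑ l, R i j k l * M i j * N k l := by
  simp only [curvForm, LinearMap.mk₂_apply, Fintype.sum_prod_type]

lemma curvForm_comm (hR : ∀ i j k l, R i j k l = R k l i j) (M N : Matrix ι ι K) :
    curvForm R M N = curvForm R N M := by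
  simp only [curvForm, LinearMap.mk₂_apply]
  rw [Finset.sum_comm]
  refine Fintype.sum_congr _ _ fun q => Fintype.sum_congr _ _ fun p => ?_
  rw [hR]
  ring

lemma curvForm_sum_smul_sum_smul {α : Type*} [Fintype α] (c : α → K) (M : α → Matrix ι ι K) :
    curvForm R (∑ a, c a • M a) (∑ b, c b • M b)
      = ∑ a, ∑ b, c a * c b * curvForm R (M a) (M b) := by
  simp only [map_sum, map_smul, LinearMap.sum_apply, LinearMap.smul_apply, smul_eq_mul,
    Finset.mul_sum, mul_assoc]
  rw [Finset.sum_comm]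
  exact Fintype.sum_congr _ _ fun a => Fintype.sum_congr _ _ fun b => mul_left_comm _ _ _

end CurvForm

lemma curvEval_eq_curvForm {n : ℕ} (R : Fin n → Fin n → Fin n → Fin n → ℂ)
    (X Y Z W : Fin n → ℂ) :
    curvEval R X Y Z W = curvForm R (vecMulVec X (star Y)) (vecMulVec Z (star W)) := by
  simp only [curvEval, curvForm_apply, vecMulVec_apply, Pi.star_apply, Complex.star_def, mul_assoc]

lemma pair_symm_of_kahler {ι : Type*} {R : ι → ι → ι → ι → ℂ}
    (hsym1 : ∀ i j k l, R i j k l = R k j i l)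
    (hsym2 : ∀ i j k l, R i j k l = (starRingEnd ℂ) (R j i l k)) (i j k l : ι) :
    R i j k l = R k l i j := by
  rw [hsym2, hsym1 j, ← hsym2, hsym1]

lemma sum_sum_mul_sub_sq_of_sum_eq {ι K : Type*} [Fintype ι] [CommRing K]
    {A : ι → ι → K} {lam : K}
    (hrow : ∀ a, ∑ b, A a b = lam) (hcol : ∀ b, ∑ a, A a b = lam) (x : ι → K) :
    ∑ a, ∑ b, A a b * (x a - x b) ^ 2
      = 2 * (lam * ∑ a, x a ^ 2 - ∑ a, ∑ b, A a b * (x a * x b)) := by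
  have h₁ : ∑ a, ∑ b, A a b * x a ^ 2 = lam * ∑ a, x a ^ 2 := by
    simp only [← Finset.sum_mul, hrow, Finset.mul_sum]
  have h₂ : ∑ a, ∑ b, A a b * x b ^ 2 = lam * ∑ a, x a ^ 2 := by
    rw [Finset.sum_comm]
    simp only [← Finset.sum_mul, hcol, Finset.mul_sum]
  calc ∑ a, ∑ b, A a b * (x a - x b) ^ 2
      = ∑ a, ∑ b, A a b * x a ^ 2 + ∑ a, ∑ b, A a b * x b ^ 2
          - 2 * ∑ a, ∑ b, A a b * (x a * x b) := by
        simp only [Finset.mul_sum, ← Finset.sum_add_distrib, ← Finset.sum_sub_distrib]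
        refine Fintype.sum_congr _ _ fun a => Fintype.sum_congr _ _ fun b => ?_
        ring
    _ = _ := by rw [h₁, h₂]; ring

section Frobenius

variable {𝕜 m n : Type*} [RCLike 𝕜] [Fintype m] [Fintype n]

lemma ofReal_sum_norm_sq_eq_trace (M : Matrix m n 𝕜) :
    ((∑ i, ∑ j, ‖M i j‖ ^ 2 : ℝ) : 𝕜) = (Mᴴ * M).trace := by
  rw [Finset.sum_comm]
  simp only [trace, diag, mul_apply, conjTranspose_apply, RCLike.star_def, RCLike.conj_mul]
  push_cast
  rfl

lemma sum_norm_sq_mul_mul_conjTranspose [DecidableEq n] {V : Matrix n n 𝕜}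
    (hV : V ∈ unitaryGroup n 𝕜) (A : Matrix n n 𝕜) :
    ∑ i, ∑ j, ‖(V * A * Vᴴ) i j‖ ^ 2 = ∑ i, ∑ j, ‖A i j‖ ^ 2 := by
  have hVV : Vᴴ * V = 1 := mem_unitaryGroup_iff'.mp hV
  apply (RCLike.ofReal_injective (K := 𝕜))
  rw [ofReal_sum_norm_sq_eq_trace, ofReal_sum_norm_sq_eq_trace]
  simp only [conjTranspose_mul, conjTranspose_conjTranspose, Matrix.mul_assoc]
  rw [← Matrix.mul_assoc Vᴴ V, hVV, Matrix.one_mul, trace_mul_comm]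
  simp only [Matrix.mul_assoc, hVV, Matrix.mul_one]

lemma sum_norm_sq_diagonal [DecidableEq n] (d : n → 𝕜) :
    ∑ i, ∑ j, ‖diagonal d i j‖ ^ 2 = ∑ i, ‖d i‖ ^ 2 := by
  simp [diagonal_apply, apply_ite (‖·‖ ^ 2)]

end Frobenius

theorem stmt15 {n : ℕ} (R : Fin n → Fin n → Fin n → Fin n → ℂ)
    (hsym1 : ∀ i j k l, R i j k l = R k j i l)
    (hsym2 : ∀ i j k l, R i j k l = (starRingEnd ℂ) (R j i l k))
    (lam : ℝ)
    (hEin : ∀ S ∈ Matrix.unitaryGroup (Fin n) ℂ, ∀ i : Fin n,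
      ∑ j, curvEval R (fun p => S i p) (fun p => S i p)
        (fun p => S j p) (fun p => S j p) = (lam : ℂ))
    (T : Matrix (Fin n) (Fin n) ℂ) (hT : T ∈ Matrix.unitaryGroup (Fin n) ℂ)
    (x : Fin n → ℝ)
    (e : Fin n → Fin n → ℂ) (he : ∀ a i, e a i = T a i)
    (P : Matrix (Fin n) (Fin n) ℂ)
    (hP : ∀ i j, P i j = ∑ a, T a i * ((x a : ℝ) : ℂ) * (starRingEnd ℂ) (T a j)) :
    (1/2 : ℂ) * ∑ a, ∑ b, curvEval R (e a) (e a) (e b) (e b) * (((x a - x b) ^ 2 : ℝ) : ℂ)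
      = (lam : ℂ) * ((∑ a, (x a) ^ 2 : ℝ) : ℂ)
        - ∑ i, ∑ j, ∑ k, ∑ l, R i j k l * P i j * P k l
    ∧ P.IsHermitian
    ∧ (∑ i, ∑ j, ‖P i j‖ ^ 2) = ∑ a, (x a) ^ 2 := by
  rw [show e = T from funext fun a => funext (he a)]
  set E : Fin n → Fin n → ℂ := fun a b => curvEval R (T a) (T a) (T b) (T b) with hE
  have hE_comm (a b : Fin n) : E a b = E b a := by
    simp only [hE, curvEval_eq_curvForm]
    exact curvForm_comm R (pair_symm_of_kahler hsym1 hsym2) _ _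
  have hrow (a : Fin n) : ∑ b, E a b = lam := hEin T hT a
  have hcol (b : Fin n) : ∑ a, E a b = lam := by simpa only [hE_comm _ b] using hrow b
  have hP_sum : P = ∑ a, (x a : ℂ) • vecMulVec (T a) (star (T a)) := by
    ext i j
    simp [hP, Matrix.sum_apply, vecMulVec_apply, mul_left_comm, mul_assoc]
  have hP_conj : P = Tᵀ * diagonal (fun a => (x a : ℂ)) * Tᵀᴴ := by
    ext i j
    simp [hP, mul_apply, diagonal_apply, mul_assoc]
  have hquad : ∑ a, ∑ b, E a b * ((x a : ℂ) * x b)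
      = ∑ i, ∑ j, ∑ k, ∑ l, R i j k l * P i j * P k l := by
    rw [← curvForm_apply, hP_sum, curvForm_sum_smul_sum_smul]
    simp only [hE, curvEval_eq_curvForm, mul_comm]
  have hT' : Tᵀ ∈ unitaryGroup (Fin n) ℂ := transpose_mem_unitaryGroup_iff.mpr hT
  refine ⟨?_, ?_, ?_⟩
  · push_cast
    rw [sum_sum_mul_sub_sq_of_sum_eq hrow hcol, ← hquad]
    ring
  · rw [hP_conj]
    exact isHermitian_mul_mul_conjTranspose _
      (isHermitian_diagonal_of_self_adjoint _ (funext fun a => Complex.conj_ofReal (x a)))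
  · rw [hP_conj, sum_norm_sq_mul_mul_conjTranspose hT', sum_norm_sq_diagonal]
    simp only [Complex.norm_real, Real.norm_eq_abs, sq_abs]
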